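/- The number of 2-Dyck paths of length 2n equals the n-th little Schröder number, where a 2-Dyck path is a Dyck path in which each up step not immediately followed by a down step is colored with one of 2 colors. -/

import Mathlib

/-- Height change of a Dyck step (`true` = up, `false` = down). -/
def dval (b : Bool) : ℤ := if b then 1 else -1

/-- The final height of a Dyck-step word. -/
def dsum (l : List Bool) : ℤ := (l.map dval).sum

/-- A Dyck path: every prefix has nonnegative height, and the final height is `0`. -/
def IsDyck (l : List Bool) : Prop :=
  (∀ pre, pre <+: l → 0 ≤ dsum pre) ∧ dsum l = 0

/-- Position `r` of `l` is a "free" up step: an up step immediately followed by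
another up step (i.e. not immediately followed by a down step; in a Dyck path
an up step is never the last step). -/
def FreeUp (l : List Bool) (r : ℕ) : Prop := l[r]? = some true ∧ l[r + 1]? = some true

/-- The number of `k`-Dyck paths of length `2i`: Dyck paths in which every up step not
immediately followed by a down step is given one of `k` colors (encoded by a coloring
function that is `< k` on free up steps and `0` elsewhere). -/
noncomputable def colouredDyck (k i : ℕ) : ℕ :=
  Nat.card {x : List Bool × (ℕ → ℕ) //
    IsDyck x.1 ∧ x.1.length = 2 * i ∧
      ∀ r, (FreeUp x.1 r → x.2 r < k) ∧ (¬ FreeUp x.1 r → x.2 r = 0)}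

/-- A Schröder step: up `(1,1)`, down `(1,-1)`, or horizontal `(2,0)`. -/
inductive SStep | U | D | H
deriving DecidableEq

/-- The x-length of a Schröder step. -/
def SStep.x : SStep → ℕ
  | SStep.U => 1
  | SStep.D => 1
  | SStep.H => 2

/-- The height change of a Schröder step. -/
def SStep.y : SStep → ℤ
  | SStep.U => 1
  | SStep.D => -1
  | SStep.H => 0

/-- The total x-length of a Schröder-step word. -/
def sxlen (l : List SStep) : ℕ := (l.map SStep.x).sum

/-- The final height of a Schröder-step word. -/
def sysum (l : List SStep) : ℤ := (l.map SStep.y).sum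

/-- A Schröder path of length `2n` with no peak at level one: nonnegative prefix
heights, final height `0`, total x-length `2n`, and no `UD` factor whose peak is
at height `1`. -/
def IsLittleSchroederPath (n : ℕ) (l : List SStep) : Prop :=
  sxlen l = 2 * n ∧ (∀ pre, pre <+: l → 0 ≤ sysum pre) ∧ sysum l = 0 ∧
    ¬ ∃ p q, l = p ++ SStep.U :: SStep.D :: q ∧ sysum p = 0

/-- The `n`-th little Schröder number: the number of Schröder paths of length `2n`
with no peaks at level one. -/
noncomputable def littleSchroeder (n : ℕ) : ℕ := Nat.card {l : List SStep // IsLittleSchroederPath n l}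

/-!
Both sides are counted through the first-return decomposition: an excursion of semilength `n + 1`
is either a level step followed by an excursion of semilength `n`, or `U m D r` with excursions
`m`, `r` of semilengths `i + j = n`, and this decomposition is unique.

In a Dyck path `U m D r` the first `U` is free exactly when `m ≠ []`, and a Dyck path with `f`
free up steps carries `2 ^ f` colourings, so the coloured count satisfies
`c (n + 1) = ∑ i + j = n, (if i = 0 then 1 else 2) * c i * c j`.
A little Schröder path is `H t` or `U m D r` with `m` a nonempty large Schröder path; together
with `r i = 2 * s i` for `i > 0`, which follows from the large Schröder recurrence, `s` satisfies
the same recurrence, and `c 0 = s 0 = 1`.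
-/

open Finset

theorem List.prefix_append_or {α : Type*} {q m r : List α} (h : q <+: m ++ r) :
    q <+: m ∨ ∃ q', q = m ++ q' ∧ q' <+: r := by
  rcases le_total q.length m.length with hle | hle
  · exact .inl (List.prefix_of_prefix_length_le h (List.prefix_append m r) hle)
  · obtain ⟨q', rfl⟩ := List.prefix_of_prefix_length_le (List.prefix_append m r) h hle
    exact .inr ⟨q', rfl, (List.prefix_append_right_inj m).1 h⟩

section Excursions

variable {α : Type*}

def IsExcursion (y : α → ℤ) (l : List α) : Prop :=
  (∀ p, p <+: l → 0 ≤ (p.map y).sum) ∧ (l.map y).sum = 0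

variable {y : α → ℤ}

theorem isExcursion_nil : IsExcursion y [] :=
  ⟨fun p hp => by simp [List.prefix_nil.1 hp], rfl⟩

theorem IsExcursion.head_nonneg {a : α} {t : List α} (h : IsExcursion y (a :: t)) :
    0 ≤ y a := by
  simpa using h.1 [a] (List.prefix_cons_iff.2 (.inr ⟨[], rfl, List.nil_prefix⟩))

theorem isExcursion_cons_iff {a : α} (ha : y a = 0) {t : List α} :
    IsExcursion y (a :: t) ↔ IsExcursion y t := by
  simp only [IsExcursion, List.prefix_cons_iff, List.map_cons, List.sum_cons, ha, zero_add]
  refine and_congr_left fun _ => ⟨fun h p hp => ?_, ?_⟩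
  · simpa [ha] using h (a :: p) (.inr ⟨p, rfl, hp⟩)
  · rintro h p (rfl | ⟨q, rfl, hq⟩)
    · simp
    · simpa [ha] using h q hq

theorem IsExcursion.cons_append {u d : α} (hu : y u = 1) (hd : y d = -1) {m r : List α}
    (hm : IsExcursion y m) (hr : IsExcursion y r) : IsExcursion y (u :: (m ++ d :: r)) := by
  refine ⟨fun p hp => ?_, by simp [hu, hd, hm.2, hr.2]⟩
  obtain rfl | ⟨q, rfl, hq⟩ := List.prefix_cons_iff.1 hp
  · simp
  obtain hq | ⟨q', rfl, hq'⟩ := List.prefix_append_or hq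
  · have := hm.1 q hq
    simp [hu]
    omega
  obtain rfl | ⟨q'', rfl, hq''⟩ := List.prefix_cons_iff.1 hq'
  · simp [hu, hm.2]
  · have := hr.1 q'' hq''
    simp [hu, hd, hm.2]
    omega

theorem exists_eq_append_cons_of_sum_neg {d : α} (hd : y d = -1)
    (hneg : ∀ a, y a < 0 → a = d) :
    ∀ (t : List α) (s : ℤ), 0 ≤ s → s + (t.map y).sum < 0 →
      ∃ m r, t = m ++ d :: r ∧ (∀ p, p <+: m → 0 ≤ s + (p.map y).sum) ∧
        s + (m.map y).sum = 0
  | [], s, hs, h => by simp at h; omega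
  | a :: t, s, hs, h => by
    by_cases ha : s + y a < 0
    · obtain rfl := hneg a (by omega)
      refine ⟨[], t, rfl, fun p hp => ?_, by simp; omega⟩
      simpa [List.prefix_nil.1 hp] using hs
    · simp only [List.map_cons, List.sum_cons] at h
      obtain ⟨m, r, rfl, hpre, hsum⟩ :=
        exists_eq_append_cons_of_sum_neg hd hneg t (s + y a) (by omega) (by omega)
      refine ⟨a :: m, r, rfl, fun p hp => ?_, by simp; omega⟩
      obtain rfl | ⟨q, rfl, hq⟩ := List.prefix_cons_iff.1 hp
      · simpa using hs
      · have := hpre q hq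
        simp
        omega

theorem IsExcursion.exists_firstReturn {u d : α} (hu : y u = 1) (hd : y d = -1)
    (hneg : ∀ a, y a < 0 → a = d) {t : List α} (h : IsExcursion y (u :: t)) :
    ∃ m r, t = m ++ d :: r ∧ IsExcursion y m ∧ IsExcursion y r := by
  have ht : (t.map y).sum = -1 := by
    have := h.2
    simp [hu] at this
    omega
  obtain ⟨m, r, rfl, hpre, hsum⟩ :=
    exists_eq_append_cons_of_sum_neg hd hneg t 0 le_rfl (by omega)
  simp only [zero_add] at hpre hsum
  refine ⟨m, r, rfl, ⟨hpre, hsum⟩, fun p hp => ?_, by simp [hd, hsum] at ht; omega⟩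
  have := h.1 (u :: (m ++ d :: p)) (by simpa using hp)
  simpa [hu, hd, hsum] using this

theorem IsExcursion.eq_of_append_cons_eq {d : α} (hd : y d < 0) {m m' r r' : List α}
    (hm : IsExcursion y m) (hm' : IsExcursion y m') (h : m ++ d :: r = m' ++ d :: r') :
    m = m' ∧ r = r' := by
  suffices ∀ {m m' r r' : List α}, IsExcursion y m → IsExcursion y m' →
      m ++ d :: r = m' ++ d :: r' → m'.length ≤ m.length from
    (List.append_inj h (le_antisymm (this hm' hm h.symm) (this hm hm' h))).imp id
      fun h => List.cons_injective h
  intro m m' r r' hm hm' h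
  by_contra! hlt
  have hpre : m ++ [d] <+: m' :=
    List.prefix_of_prefix_length_le (by rw [← h]; simp) (List.prefix_append _ _)
      (by simpa using hlt)
  have := hm'.1 _ hpre
  simp [hm.2] at this
  omega

/-- `u` and `d` are the up and down steps, every other letter is a level step of width 2; `x` is the
horizontal length. Dyck paths (over `Bool`) and Schröder paths (over `SStep`) are excursions over
such step sets. -/
structure IsSchroederStepSet (y : α → ℤ) (x : α → ℕ) (u d : α) : Prop where
  y_up : y u = 1
  y_down : y d = -1
  x_up : x u = 1
  x_down : x d = 1
  level : ∀ a, a ≠ u → a ≠ d → y a = 0 ∧ x a = 2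

namespace IsSchroederStepSet

variable {x : α → ℕ} {u d : α}

theorem eq_down_of_neg (h : IsSchroederStepSet y x u d) {a : α} (ha : y a < 0) : a = d := by
  by_contra had
  have hau : a ≠ u := by rintro rfl; rw [h.y_up] at ha; omega
  rw [(h.level a hau had).1] at ha
  exact lt_irrefl 0 ha

theorem x_pos (h : IsSchroederStepSet y x u d) (a : α) : 0 < x a := by
  by_cases hau : a = u; · simp [hau, h.x_up]
  by_cases had : a = d; · simp [had, h.x_down]
  simp [(h.level a hau had).2]

theorem two_dvd_sum_map (h : IsSchroederStepSet y x u d) {l : List α} (hl : IsExcursion y l) :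
    2 ∣ (l.map x).sum := by
  have step : ∀ a, (2 : ℤ) ∣ x a - y a := fun a => by
    by_cases hau : a = u; · simp [hau, h.x_up, h.y_up]
    by_cases had : a = d; · simp [had, h.x_down, h.y_down]
    simp [h.level a hau had]
  have : ∀ l : List α, (2 : ℤ) ∣ ((l.map x).sum : ℤ) - (l.map y).sum := by
    intro l
    induction l with
    | nil => simp
    | cons a t ih =>
      simp only [List.map_cons, List.sum_cons, Nat.cast_add]
      obtain ⟨i, hi⟩ := step a
      obtain ⟨j, hj⟩ := ih
      exact ⟨i + j, by linarith⟩
  have := this l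
  rw [hl.2, sub_zero] at this
  exact_mod_cast this

end IsSchroederStepSet

abbrev Excursion (y : α → ℤ) (x : α → ℕ) (n : ℕ) : Type _ :=
  {l : List α // IsExcursion y l ∧ (l.map x).sum = 2 * n}

namespace Excursion

variable {x : α → ℕ} {u d : α}

theorem finite [Finite α] (hx : ∀ a, 0 < x a) (n : ℕ) : Finite (Excursion y x n) := by
  refine ((List.finite_length_le α (2 * n)).subset fun l hl => ?_).to_subtype
  have : (l.map fun _ => 1).sum ≤ (l.map x).sum := List.sum_le_sum fun a _ => hx a
  have := hl.2
  simp_all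

theorem val_eq_nil_iff (hx : ∀ a, 0 < x a) {n : ℕ} (l : Excursion y x n) :
    l.1 = [] ↔ n = 0 := by
  rcases l with ⟨_ | ⟨a, t⟩, -, hl⟩
  · simp at hl ⊢
    omega
  · have := hx a
    simp at hl ⊢
    omega

def ofFirstReturn (h : IsSchroederStepSet y x u d) (n : ℕ) :
    {a // a ≠ u ∧ a ≠ d} × Excursion y x n ⊕
        (p : antidiagonal n) × (Excursion y x p.1.1 × Excursion y x p.1.2) →
      Excursion y x (n + 1)
  | .inl (a, t) => ⟨a.1 :: t.1, (isExcursion_cons_iff (h.level a.1 a.2.1 a.2.2).1).2 t.2.1, by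
      simp [(h.level a.1 a.2.1 a.2.2).2, t.2.2]; ring⟩
  | .inr ⟨p, m, r⟩ => ⟨u :: (m.1 ++ d :: r.1), m.2.1.cons_append h.y_up h.y_down r.2.1, by
      have := mem_antidiagonal.1 p.2
      simp [h.x_up, h.x_down, m.2.2, r.2.2]
      omega⟩

theorem ofFirstReturn_injective (h : IsSchroederStepSet y x u d) (n : ℕ) :
    Function.Injective (ofFirstReturn h n) := by
  rintro (⟨⟨a, ha⟩, t⟩ | ⟨⟨⟨i, j⟩, hij⟩, m, r⟩)
    (⟨⟨a', ha'⟩, t'⟩ | ⟨⟨⟨i', j'⟩, hij'⟩, m', r'⟩) heq <;>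
    simp only [ofFirstReturn, Subtype.mk.injEq, List.cons.injEq] at heq
  · obtain ⟨rfl, ht⟩ := heq
    obtain rfl := Subtype.ext ht
    rfl
  · exact absurd heq.1 ha.1
  · exact absurd heq.1.symm ha'.1
  · obtain ⟨hm, hr⟩ :=
      IsExcursion.eq_of_append_cons_eq (by simp [h.y_down]) m.2.1 m'.2.1 heq.2
    have hsize_m := m.2.2
    have hsize_r := r.2.2
    rw [hm, m'.2.2] at hsize_m
    rw [hr, r'.2.2] at hsize_r
    obtain rfl : i' = i := by simpa using hsize_m
    obtain rfl : j' = j := by simpa using hsize_r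
    obtain rfl := Subtype.ext hm
    obtain rfl := Subtype.ext hr
    rfl

theorem ofFirstReturn_surjective (h : IsSchroederStepSet y x u d) (n : ℕ) :
    Function.Surjective (ofFirstReturn h n) := by
  rintro ⟨_ | ⟨a, t⟩, hl, hsize⟩
  · simp at hsize
  by_cases hau : a = u
  · subst hau
    obtain ⟨m, r, rfl, hm, hr⟩ :=
      hl.exists_firstReturn h.y_up h.y_down fun _ => h.eq_down_of_neg
    obtain ⟨i, hi⟩ := h.two_dvd_sum_map hm
    obtain ⟨j, hj⟩ := h.two_dvd_sum_map hr
    have hij : i + j = n := by simp [h.x_up, h.x_down, hi, hj] at hsize; omega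
    exact ⟨.inr ⟨⟨(i, j), mem_antidiagonal.2 hij⟩, ⟨m, hm, hi⟩, ⟨r, hr, hj⟩⟩,
      rfl⟩
  by_cases had : a = d
  · subst had
    have := hl.head_nonneg
    rw [h.y_down] at this
    omega
  obtain ⟨hya, hxa⟩ := h.level a hau had
  refine ⟨.inl (⟨a, hau, had⟩, ⟨t, (isExcursion_cons_iff hya).1 hl, ?_⟩), rfl⟩
  simp [hxa] at hsize
  omega

noncomputable def firstReturnEquiv (h : IsSchroederStepSet y x u d) (n : ℕ) :
    {a // a ≠ u ∧ a ≠ d} × Excursion y x n ⊕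
        (p : antidiagonal n) × (Excursion y x p.1.1 × Excursion y x p.1.2) ≃
      Excursion y x (n + 1) :=
  .ofBijective _ ⟨ofFirstReturn_injective h n, ofFirstReturn_surjective h n⟩

theorem sum_succ [DecidableEq α] [Fintype α] [∀ n, Fintype (Excursion y x n)]
    {M : Type*} [AddCommMonoid M] (h : IsSchroederStepSet y x u d) (f : List α → M) (n : ℕ) :
    ∑ l : Excursion y x (n + 1), f l.1 =
      ∑ a : {a // a ≠ u ∧ a ≠ d}, ∑ t : Excursion y x n, f (a.1 :: t.1) +
        ∑ p ∈ antidiagonal n, ∑ m : Excursion y x p.1, ∑ r : Excursion y x p.2,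
          f (u :: (m.1 ++ d :: r.1)) := by
  rw [← (firstReturnEquiv h n).sum_comp, Fintype.sum_sum_type, Fintype.sum_prod_type,
    Fintype.sum_sigma, ← sum_coe_sort (antidiagonal n)]
  simp only [Fintype.sum_prod_type]
  rfl

theorem sum_zero [Fintype (Excursion y x 0)] {M : Type*} [AddCommMonoid M] (hx : ∀ a, 0 < x a)
    (f : List α → M) : ∑ l : Excursion y x 0, f l.1 = f [] :=
  (Fintype.sum_eq_single ⟨[], isExcursion_nil, rfl⟩ fun l hl =>
    absurd (Subtype.ext ((val_eq_nil_iff hx l).2 rfl)) hl).trans rfl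

end Excursion

end Excursions

instance : Fintype SStep := ⟨{.U, .D, .H}, fun a => by cases a <;> simp⟩

theorem isSchroederStepSet_sStep : IsSchroederStepSet SStep.y SStep.x .U .D :=
  ⟨rfl, rfl, rfl, rfl, fun a hU hD => by cases a <;> simp_all [SStep.y, SStep.x]⟩

noncomputable instance (n : ℕ) : Fintype (Excursion SStep.y SStep.x n) :=
  have := Excursion.finite (y := SStep.y) isSchroederStepSet_sStep.x_pos n
  .ofFinite _

theorem sum_sStep_level {M : Type*} [AddCommMonoid M]
    (g : {a : SStep // a ≠ .U ∧ a ≠ .D} → M) :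
    ∑ a, g a = g ⟨.H, by decide⟩ := by
  refine Fintype.sum_eq_single _ ?_
  rintro ⟨_ | _ | _, ha⟩ hne
  exacts [absurd rfl ha.1, absurd rfl ha.2, absurd rfl hne]

theorem Nat.largeSchroder_succ_eq_sum_antidiagonal (n : ℕ) :
    Nat.largeSchroder (n + 1) =
      Nat.largeSchroder n +
        ∑ p ∈ antidiagonal n, Nat.largeSchroder p.1 * Nat.largeSchroder p.2 := by
  rw [Nat.largeSchroder_succ, ← Nat.range_succ_eq_Iic,
    Finset.Nat.sum_antidiagonal_eq_sum_range_succ_mk]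

theorem card_schroederPath (n : ℕ) :
    Fintype.card (Excursion SStep.y SStep.x n) = Nat.largeSchroder n := by
  induction n using Nat.strong_induction_on with
  | _ n ih =>
  cases n with
  | zero =>
    rw [Fintype.card_eq_sum_ones,
      Excursion.sum_zero isSchroederStepSet_sStep.x_pos (fun _ => 1), Nat.largeSchroder_zero]
  | succ n =>
    rw [Fintype.card_eq_sum_ones, Excursion.sum_succ isSchroederStepSet_sStep (fun _ => 1),
      sum_sStep_level, Nat.largeSchroder_succ_eq_sum_antidiagonal, ← Fintype.card_eq_sum_ones,
      ih n n.lt_succ_self]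
    refine congrArg _ (sum_congr rfl fun p hp => ?_)
    have := mem_antidiagonal.1 hp
    simp only [sum_const, card_univ, smul_eq_mul, mul_one]
    rw [ih p.1 (by omega), ih p.2 (by omega)]

def HasLevelOnePeak (l : List SStep) : Prop :=
  ∃ p q, l = p ++ SStep.U :: SStep.D :: q ∧ sysum p = 0

noncomputable instance : DecidablePred HasLevelOnePeak := Classical.decPred _

theorem hasLevelOnePeak_H_cons {t : List SStep} :
    HasLevelOnePeak (.H :: t) ↔ HasLevelOnePeak t := by
  constructor
  · rintro ⟨_ | ⟨a, p⟩, q, hl, hp⟩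
    · simp at hl
    · obtain ⟨rfl, rfl⟩ := List.cons.inj hl
      exact ⟨p, q, rfl, by simpa [sysum, SStep.y] using hp⟩
  · rintro ⟨p, q, rfl, hp⟩
    exact ⟨.H :: p, q, rfl, by simpa [sysum, SStep.y] using hp⟩

theorem hasLevelOnePeak_U_cons_append {m r : List SStep} (hm : IsExcursion SStep.y m) :
    HasLevelOnePeak (.U :: (m ++ .D :: r)) ↔ m = [] ∨ HasLevelOnePeak r := by
  constructor
  · rintro ⟨_ | ⟨a, p⟩, q, hl, hp⟩
    · obtain ⟨-, hl⟩ := List.cons.inj hl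
      cases m with
      | nil => exact .inl rfl
      | cons b m =>
        obtain ⟨rfl, -⟩ := List.cons.inj hl
        have := hm.head_nonneg
        simp [SStep.y] at this
    · obtain ⟨rfl, hl'⟩ := List.cons.inj hl
      have hp' : (p.map SStep.y).sum = -1 := by simp [sysum, SStep.y] at hp; omega
      obtain hpm | ⟨p', rfl, hp'D⟩ :=
        List.prefix_append_or (⟨_, hl'.symm⟩ : p <+: m ++ .D :: r)
      · have := hm.1 p hpm
        omega
      obtain rfl | ⟨p', rfl, -⟩ := List.prefix_cons_iff.1 hp'D
      · simp [hm.2] at hp'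
      · refine .inr ⟨p', q, ?_, ?_⟩
        · simpa using hl'
        · simpa [sysum, SStep.y, hm.2] using hp'
  · rintro (rfl | ⟨p, q, rfl, hp⟩)
    · exact ⟨[], r, rfl, rfl⟩
    · refine ⟨.U :: (m ++ .D :: p), q, by simp, ?_⟩
      simp [sysum, SStep.y, hm.2] at hp ⊢
      exact hp

theorem littleSchroeder_eq_sum (n : ℕ) :
    littleSchroeder n =
      ∑ l : Excursion SStep.y SStep.x n, if HasLevelOnePeak l.1 then 0 else 1 := by
  have e : {l // IsLittleSchroederPath n l} ≃
      {l : Excursion SStep.y SStep.x n // ¬ HasLevelOnePeak l.1} :=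
    { toFun := fun l => ⟨⟨l.1, ⟨l.2.2.1, l.2.2.2.1⟩, l.2.1⟩, l.2.2.2.2⟩
      invFun := fun l => ⟨l.1.1, l.1.2.2, l.1.2.1.1, l.1.2.1.2, l.2⟩
      left_inv := fun _ => rfl
      right_inv := fun _ => rfl }
  rw [littleSchroeder, Nat.card_congr e, Nat.card_eq_fintype_card, Fintype.card_subtype,
    card_filter]
  simp only [ite_not]

theorem littleSchroeder_zero : littleSchroeder 0 = 1 := by
  rw [littleSchroeder_eq_sum, Excursion.sum_zero isSchroederStepSet_sStep.x_pos
    (fun l => if HasLevelOnePeak l then 0 else 1)]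
  simp [HasLevelOnePeak]

theorem littleSchroeder_succ (n : ℕ) :
    littleSchroeder (n + 1) = littleSchroeder n +
      ∑ p ∈ antidiagonal n,
        (if p.1 = 0 then 0 else Nat.largeSchroder p.1) * littleSchroeder p.2 := by
  rw [littleSchroeder_eq_sum, Excursion.sum_succ isSchroederStepSet_sStep
    (fun l => if HasLevelOnePeak l then 0 else 1), sum_sStep_level]
  simp only [hasLevelOnePeak_H_cons, ← littleSchroeder_eq_sum]
  refine congrArg _ (sum_congr rfl fun p _ => ?_)
  have hx := isSchroederStepSet_sStep.x_pos
  calc ∑ m : Excursion SStep.y SStep.x p.1, ∑ r : Excursion SStep.y SStep.x p.2,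
          (if HasLevelOnePeak (.U :: (m.1 ++ .D :: r.1)) then 0 else 1)
      = ∑ _m : Excursion SStep.y SStep.x p.1, ∑ r : Excursion SStep.y SStep.x p.2,
          (if p.1 = 0 then 0 else 1) * (if HasLevelOnePeak r.1 then 0 else 1) := by
        refine sum_congr rfl fun m _ => sum_congr rfl fun r _ => ?_
        simp only [hasLevelOnePeak_U_cons_append m.2.1, Excursion.val_eq_nil_iff hx]
        split_ifs <;> simp_all
    _ = _ := by
        rw [littleSchroeder_eq_sum, ← card_schroederPath, ← mul_sum, sum_const, card_univ,
          smul_eq_mul, ← mul_assoc]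
        split_ifs <;> simp

theorem isSchroederStepSet_bool : IsSchroederStepSet dval (fun _ => 1) true false :=
  ⟨rfl, rfl, rfl, rfl, fun a h₁ h₂ => by cases a <;> simp_all⟩

noncomputable instance (n : ℕ) : Fintype (Excursion dval (fun _ => 1) n) :=
  have := Excursion.finite (y := dval) isSchroederStepSet_bool.x_pos n
  .ofFinite _

instance (l : List Bool) : DecidablePred (FreeUp l) :=
  fun _ => inferInstanceAs (Decidable (_ ∧ _))

def freeUpCount : List Bool → ℕ
  | [] => 0
  | a :: t => (if FreeUp (a :: t) 0 then 1 else 0) + freeUpCount t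

theorem freeUp_cons_zero {a : Bool} {t : List Bool} :
    FreeUp (a :: t) 0 ↔ a = true ∧ t[0]? = some true := by
  simp [FreeUp]

theorem freeUpCount_append_false_cons (m r : List Bool) :
    freeUpCount (m ++ false :: r) = freeUpCount m + freeUpCount r := by
  induction m with
  | nil => simp [freeUpCount, freeUp_cons_zero]
  | cons a m ih =>
    cases m <;> simp_all [freeUpCount, freeUp_cons_zero]
    omega

theorem freeUpCount_true_cons_append {m : List Bool} (hm : IsExcursion dval m) (r : List Bool) :
    freeUpCount (true :: (m ++ false :: r)) =
      (if m = [] then 0 else 1) + freeUpCount m + freeUpCount r := by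
  simp only [freeUpCount, freeUpCount_append_false_cons, freeUp_cons_zero]
  cases m with
  | nil => simp
  | cons b m =>
    have := hm.head_nonneg
    cases b <;> simp_all [dval]
    omega

def Colouring (k : ℕ) (l : List Bool) : Type :=
  {c : ℕ → ℕ // ∀ r, (FreeUp l r → c r < k) ∧ (¬ FreeUp l r → c r = 0)}

def Colouring.consEquiv (k : ℕ) (a : Bool) (t : List Bool) :
    Colouring k (a :: t) ≃
      {v : ℕ // (FreeUp (a :: t) 0 → v < k) ∧ (¬ FreeUp (a :: t) 0 → v = 0)} ×
        Colouring k t where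
  toFun c := (⟨c.1 0, c.2 0⟩, ⟨fun r => c.1 (r + 1), fun r => c.2 (r + 1)⟩)
  invFun vc := ⟨fun r => Nat.casesOn r vc.1.1 vc.2.1,
    fun r => by cases r; exacts [vc.1.2, vc.2.2 _]⟩
  left_inv c := Subtype.ext (funext fun r => by cases r <;> rfl)
  right_inv _ := rfl

theorem nonempty_subtype_equiv_fin_ite (P : Prop) [Decidable P] (k : ℕ) :
    Nonempty ({v : ℕ // (P → v < k) ∧ (¬ P → v = 0)} ≃ Fin (if P then k else 1)) := by
  by_cases hP : P
  · simp only [hP, if_true, not_true_eq_false, false_imp_iff, and_true, true_imp_iff]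
    exact ⟨Fin.equivSubtype.symm⟩
  · simp only [hP, if_false, false_imp_iff, true_and, not_false_eq_true, true_imp_iff]
    exact ⟨Equiv.ofUnique _ _⟩

theorem Colouring.nonempty_equiv_fin (k : ℕ) :
    ∀ l, Nonempty (Colouring k l ≃ Fin (k ^ freeUpCount l))
  | [] => ⟨@Equiv.ofUnique _ _ ⟨⟨⟨fun _ => 0, fun r => by simp [FreeUp]⟩⟩,
      fun c => Subtype.ext (funext fun r => (c.2 r).2 (by simp [FreeUp]))⟩
      (inferInstanceAs (Unique (Fin 1)))⟩
  | a :: t => by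
    obtain ⟨e⟩ := nonempty_subtype_equiv_fin_ite (FreeUp (a :: t) 0) k
    obtain ⟨e'⟩ := Colouring.nonempty_equiv_fin k t
    refine ⟨(consEquiv k a t).trans
      ((e.prodCongr e').trans (finProdFinEquiv.trans (finCongr ?_)))⟩
    split_ifs with h <;> simp [freeUpCount, h, pow_add]

theorem colouredDyck_eq_sum (k n : ℕ) :
    colouredDyck k n = ∑ l : Excursion dval (fun _ => 1) n, k ^ freeUpCount l.1 := by
  have e : {x : List Bool × (ℕ → ℕ) // IsDyck x.1 ∧ x.1.length = 2 * n ∧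
        ∀ r, (FreeUp x.1 r → x.2 r < k) ∧ (¬ FreeUp x.1 r → x.2 r = 0)} ≃
      (l : Excursion dval (fun _ => 1) n) × Colouring k l.1 :=
    { toFun := fun x => ⟨⟨x.1.1, x.2.1, by simpa using x.2.2.1⟩, ⟨x.1.2, x.2.2.2⟩⟩
      invFun := fun s => ⟨(s.1.1, s.2.1), s.1.2.1, by simpa using s.1.2.2, s.2.2⟩
      left_inv := fun _ => rfl
      right_inv := fun _ => rfl }
  have (l : List Bool) : Finite (Colouring k l) :=
    (Colouring.nonempty_equiv_fin k l).elim fun e => .of_equiv _ e.symm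
  rw [colouredDyck, Nat.card_congr e, Nat.card_sigma]
  exact sum_congr rfl fun l _ => (Colouring.nonempty_equiv_fin k l.1).elim Nat.card_eq_of_equiv_fin

theorem sum_bool_level {M : Type*} [AddCommMonoid M]
    (g : {a : Bool // a ≠ true ∧ a ≠ false} → M) :
    ∑ a, g a = 0 :=
  Fintype.sum_eq_zero _ fun ⟨a, ha⟩ => by cases a <;> simp at ha

theorem colouredDyck_zero (k : ℕ) : colouredDyck k 0 = 1 := by
  rw [colouredDyck_eq_sum,
    Excursion.sum_zero isSchroederStepSet_bool.x_pos (fun l => k ^ freeUpCount l)]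
  rfl

theorem colouredDyck_succ (k n : ℕ) :
    colouredDyck k (n + 1) = ∑ p ∈ antidiagonal n,
      (if p.1 = 0 then 1 else k) * colouredDyck k p.1 * colouredDyck k p.2 := by
  rw [colouredDyck_eq_sum, Excursion.sum_succ isSchroederStepSet_bool (fun l => k ^ freeUpCount l),
    sum_bool_level, zero_add]
  refine sum_congr rfl fun p _ => ?_
  have hx := isSchroederStepSet_bool.x_pos
  calc ∑ m : Excursion dval (fun _ => 1) p.1, ∑ r : Excursion dval (fun _ => 1) p.2,
          k ^ freeUpCount (true :: (m.1 ++ false :: r.1))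
      = ∑ m : Excursion dval (fun _ => 1) p.1, ∑ r : Excursion dval (fun _ => 1) p.2,
          (if p.1 = 0 then 1 else k) * k ^ freeUpCount m.1 * k ^ freeUpCount r.1 := by
        refine sum_congr rfl fun m _ => sum_congr rfl fun r _ => ?_
        simp only [freeUpCount_true_cons_append m.2.1, Excursion.val_eq_nil_iff hx, pow_add]
        split_ifs <;> simp
    _ = _ := by
        rw [colouredDyck_eq_sum, colouredDyck_eq_sum, ← sum_mul_sum, ← mul_sum]

theorem two_mul_littleSchroeder (n : ℕ) :
    2 * littleSchroeder n = Nat.largeSchroder n + if n = 0 then 1 else 0 := by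
  induction n using Nat.strong_induction_on with
  | _ n ih =>
  match n with
  | 0 => simp [littleSchroeder_zero]
  | 1 => simp [littleSchroeder_succ, littleSchroeder_zero]
  | j + 2 =>
    -- the `(j, 0)` term, where `largeSchroder 0 = 1` falls one short of `2 * littleSchroeder 0`
    have hcorner : ∑ p ∈ antidiagonal j,
        Nat.largeSchroder (p.1 + 1) * (if p.2 = 0 then 1 else 0) = Nat.largeSchroder (j + 1) := by
      rw [sum_eq_single_of_mem (j, 0) (by simp) fun p hp hne => ?_]
      · simp
      · have := mem_antidiagonal.1 hp
        rw [if_neg fun h => hne (Prod.ext (by omega) h), mul_zero]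
    have hsum : ∑ p ∈ antidiagonal j, Nat.largeSchroder (p.1 + 1) * (2 * littleSchroeder p.2) =
        ∑ p ∈ antidiagonal j, Nat.largeSchroder (p.1 + 1) * Nat.largeSchroder p.2 +
          Nat.largeSchroder (j + 1) := by
      rw [← hcorner, ← sum_add_distrib]
      refine sum_congr rfl fun p hp => ?_
      rw [ih p.2 (by have := mem_antidiagonal.1 hp; omega), mul_add]
    have h1 := ih (j + 1) (by omega)
    have hcomm : ∑ p ∈ antidiagonal j,
        2 * ((if p.1 + 1 = 0 then 0 else Nat.largeSchroder (p.1 + 1)) * littleSchroeder p.2) =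
        ∑ p ∈ antidiagonal j, Nat.largeSchroder (p.1 + 1) * (2 * littleSchroeder p.2) :=
      sum_congr rfl fun _ _ => by rw [if_neg (Nat.succ_ne_zero _)]; ring
    rw [littleSchroeder_succ, Finset.Nat.sum_antidiagonal_succ,
      Nat.largeSchroder_succ_eq_sum_antidiagonal (j + 1), Finset.Nat.sum_antidiagonal_succ,
      mul_add, mul_add, mul_sum, hcomm, hsum]
    simp only [Nat.add_one_ne_zero, if_false, if_true, add_zero, mul_zero, zero_add, zero_mul,
      Nat.largeSchroder_zero, one_mul] at h1 ⊢
    omega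

theorem littleSchroeder_succ_eq_sum (n : ℕ) :
    littleSchroeder (n + 1) = ∑ p ∈ antidiagonal n,
      (if p.1 = 0 then 1 else 2) * littleSchroeder p.1 * littleSchroeder p.2 := by
  have hsplit : ∀ p ∈ antidiagonal n,
      (if p.1 = 0 then 1 else 2) * littleSchroeder p.1 * littleSchroeder p.2 =
        (if p.1 = 0 then littleSchroeder p.2 else 0) +
          (if p.1 = 0 then 0 else Nat.largeSchroder p.1) * littleSchroeder p.2 := fun p _ => by
    split_ifs with h
    · simp [h, littleSchroeder_zero]
    · simp [two_mul_littleSchroeder, h]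
  have hcorner : ∑ p ∈ antidiagonal n, (if p.1 = 0 then littleSchroeder p.2 else 0) =
      littleSchroeder n := by
    rw [sum_eq_single_of_mem (0, n) (by simp) fun p hp hne => ?_]
    · rfl
    · have := mem_antidiagonal.1 hp
      rw [if_neg fun h => hne (Prod.ext h (by omega))]
  rw [sum_congr rfl hsplit, sum_add_distrib, hcorner, littleSchroeder_succ]

/-- The number of 2-Dyck paths of length `2n` equals the `n`-th little Schröder number. -/
theorem stmt_17 (n : ℕ) : colouredDyck 2 n = littleSchroeder n := by
  induction n using Nat.strong_induction_on with
  | _ n ih =>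
  cases n with
  | zero => rw [colouredDyck_zero, littleSchroeder_zero]
  | succ n =>
    rw [colouredDyck_succ, littleSchroeder_succ_eq_sum]
    refine sum_congr rfl fun p hp => ?_
    have := mem_antidiagonal.1 hp
    rw [ih p.1 (by omega), ih p.2 (by omega)]
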